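/- arXiv:math/0304476 — 7 statements merged into one kernel-verified Lean document; each statement's English description precedes it below -/
import Mathlib

section
/- There is no infinite binary word avoiding all squares yy with |y| ≥ 2; in fact, every binary word of length at least 19 contains a square yy with |y| ≥ 2. -/
/-!
Every suffix of a word avoiding squares `yy` with `|y| ≥ 2` avoids them too, so all such binary
words arise by prepending letters one at a time, and a newly prepended letter can only create a
square that is a prefix. Running this left-extension search exhausts it at length 19. An infinite
word contains its prefix of length 19, hence a square there.
-/

/-- `x` occurs as a factor (contiguous subword) of the infinite word `w`. -/
def FactorOf {α : Type*} (x : List α) (w : ℕ → α) : Prop :=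
  ∃ i, x = (List.range x.length).map (fun j => w (i + j))

variable {α : Type*}

def LongSquareFree (w : List α) : Prop :=
  ∀ y : List α, 2 ≤ y.length → ¬ (y ++ y) <:+: w

theorem LongSquareFree.of_infix {u w : List α} (hw : LongSquareFree w) (huw : u <:+: w) :
    LongSquareFree u :=
  fun y hy hyu => hw y hy (hyu.trans huw)

def hasLongSquarePrefix [DecidableEq α] (w : List α) : Bool :=
  decide (∃ k < w.length, 2 ≤ k ∧ w.take k = (w.drop k).take k)

theorem not_longSquareFree_of_hasLongSquarePrefix [DecidableEq α] {w : List α}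
    (h : hasLongSquarePrefix w) : ¬ LongSquareFree w := by
  obtain ⟨k, hkw, hk, hsq⟩ := of_decide_eq_true h
  refine fun hw => hw (w.take k) (by grind) ?_
  nth_rw 2 [hsq]
  rw [← List.take_add]
  exact (w.take_prefix (k + k)).isInfix

def longSquareFreeCandidates (m : ℕ) : ℕ → List (List (Fin m))
  | 0 => [[]]
  | n + 1 => (longSquareFreeCandidates m n).flatMap fun w =>
      ((List.finRange m).map (· :: w)).filter fun v => !hasLongSquarePrefix v

theorem mem_longSquareFreeCandidates {m : ℕ} :
    ∀ {w : List (Fin m)}, LongSquareFree w → w ∈ longSquareFreeCandidates m w.length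
  | [], _ => List.mem_singleton_self _
  | a :: w, hw => by
    have hprefix : hasLongSquarePrefix (a :: w) = false := by
      simpa using mt not_longSquareFree_of_hasLongSquarePrefix (not_not.mpr hw)
    simp only [longSquareFreeCandidates, List.length_cons, List.mem_flatMap, List.mem_filter,
      List.mem_map, List.mem_finRange]
    exact ⟨w, mem_longSquareFreeCandidates (hw.of_infix (w.suffix_cons a).isInfix),
      ⟨a, trivial, rfl⟩, by simp [hprefix]⟩

theorem longSquareFreeCandidates_two_nineteen : longSquareFreeCandidates 2 19 = [] := by decide

theorem not_longSquareFree_of_nineteen_le_length {w : List (Fin 2)} (hw : 19 ≤ w.length) :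
    ¬ LongSquareFree w := fun hfree => by
  have := mem_longSquareFreeCandidates (hfree.of_infix (w.take_prefix 19).isInfix)
  simp [Nat.min_eq_left hw, longSquareFreeCandidates_two_nineteen] at this

theorem factorOf_of_infix_map_range {x : List α} {w : ℕ → α} {n : ℕ}
    (h : x <:+: (List.range n).map w) : FactorOf x w := by
  obtain ⟨s, t, hst⟩ := h
  have hlen : s.length + (x.length + t.length) = n := by simpa using congrArg List.length hst
  refine ⟨s.length, List.ext_getElem (by simp) fun j hj _ => ?_⟩
  calc x[j] = (s ++ x ++ t)[s.length + j]'(by simp; omega) := by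
        rw [List.getElem_append_left (by simp; omega), List.getElem_append_right (by omega)]
        simp
    _ = ((List.range n).map w)[s.length + j]'(by simp; omega) := List.getElem_of_eq hst _
    _ = _ := by simp

theorem no_infinite_word_avoiding_squares_ge_two :
    (∀ w : ℕ → Fin 2, ∃ y : List (Fin 2), 2 ≤ y.length ∧ FactorOf (y ++ y) w) ∧
    (∀ w : List (Fin 2), 19 ≤ w.length →
      ∃ y : List (Fin 2), 2 ≤ y.length ∧ (y ++ y) <:+: w) := by
  have hfinite : ∀ w : List (Fin 2), 19 ≤ w.length →
      ∃ y : List (Fin 2), 2 ≤ y.length ∧ (y ++ y) <:+: w := fun w hw => by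
    simpa [LongSquareFree] using not_longSquareFree_of_nineteen_le_length hw
  refine ⟨fun w => ?_, hfinite⟩
  obtain ⟨y, hy, hsq⟩ := hfinite ((List.range 19).map w) (by simp)
  exact ⟨y, hy, factorOf_of_infix_map_range hsq⟩
end

section
/- There is no infinite binary word that simultaneously avoids all squares yy with |y| ≥ 3 and all cubes xxx; in fact, every binary word of length at least 30 contains either a square yy with |y| ≥ 3 or a cube. -/
namespace List

variable {α : Type*}

def HasLongSquareOrCube (w : List α) : Prop :=
  (∃ y : List α, 3 ≤ y.length ∧ (y ++ y) <:+: w) ∨ (∃ x : List α, x ≠ [] ∧ (x ++ x ++ x) <:+: w)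

theorem HasLongSquareOrCube.mono {v w : List α} (h : v.HasLongSquareOrCube) (hvw : v <:+: w) :
    w.HasLongSquareOrCube := by
  rcases h with ⟨y, hy, hyv⟩ | ⟨x, hx, hxv⟩
  exacts [Or.inl ⟨y, hy, hyv.trans hvw⟩, Or.inr ⟨x, hx, hxv.trans hvw⟩]

-- Phrased through suffix lengths rather than `∃ y, y ++ y <:+ p`, so that it is decidable and
-- the kernel evaluates it fast.
def HasSquareOrCubeSuffix [DecidableEq α] (p : List α) : Prop :=
  ∃ l ≤ p.length, (3 ≤ l ∧ 2 * l ≤ p.length ∧ p.rtake (2 * l) = p.rtake l ++ p.rtake l) ∨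
    (1 ≤ l ∧ 3 * l ≤ p.length ∧ p.rtake (3 * l) = p.rtake l ++ p.rtake l ++ p.rtake l)

instance [DecidableEq α] : DecidablePred (HasSquareOrCubeSuffix (α := α)) :=
  fun p => by unfold HasSquareOrCubeSuffix; infer_instance

theorem length_rtake_of_le {p : List α} {l : ℕ} (h : l ≤ p.length) : (p.rtake l).length = l := by
  rw [rtake, length_drop]; omega

theorem rtake_suffix (p : List α) (l : ℕ) : p.rtake l <:+ p := drop_suffix _ _

theorem HasSquareOrCubeSuffix.hasLongSquareOrCube [DecidableEq α] {p : List α}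
    (h : p.HasSquareOrCubeSuffix) : p.HasLongSquareOrCube := by
  obtain ⟨l, hl, ⟨hl3, -, hsq⟩ | ⟨hl1, -, hcube⟩⟩ := h
  · exact Or.inl ⟨p.rtake l, by rw [length_rtake_of_le hl]; exact hl3,
      hsq ▸ (rtake_suffix p _).isInfix⟩
  · refine Or.inr ⟨p.rtake l, ?_, hcube ▸ (rtake_suffix p _).isInfix⟩
    rw [← length_pos_iff, length_rtake_of_le hl]; exact hl1

def survivors (letters : List α) (bad : List α → Prop) [DecidablePred bad] : ℕ → List (List α)
  | 0 => [[]]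
  | n + 1 => ((survivors letters bad n).flatMap fun w => letters.map (w ++ [·])).filter
      fun v => ¬ bad v

section survivors

variable {letters : List α} {bad : List α → Prop} [DecidablePred bad]

theorem mem_survivors (hletters : ∀ a, a ∈ letters) {w : List α}
    (hw : ∀ p, p <+: w → ¬ bad p) : w ∈ survivors letters bad w.length := by
  induction w using reverseRecOn with
  | nil => simp [survivors]
  | append_singleton w a ih =>
    rw [length_append, length_singleton, survivors, mem_filter, mem_flatMap]
    refine ⟨⟨w, ih fun p hp => hw p (hp.trans (prefix_append _ _)), mem_map.2 ⟨a, hletters a, rfl⟩⟩,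
      by simpa using hw _ (prefix_refl _)⟩

theorem exists_prefix_of_survivors_eq_nil (hletters : ∀ a, a ∈ letters) {n : ℕ}
    (hn : survivors letters bad n = []) {w : List α} (hw : n ≤ w.length) :
    ∃ p, p <+: w ∧ bad p := by
  by_contra! hgood
  have := mem_survivors hletters (w := w.take n) fun p hp => hgood p (hp.trans (take_prefix _ _))
  rw [length_take_of_le hw, hn] at this
  exact not_mem_nil this

end survivors

theorem survivors_hasSquareOrCubeSuffix_thirty :
    survivors [0, 1] (HasSquareOrCubeSuffix (α := Fin 2)) 30 = [] := by
  decide +kernel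

theorem hasLongSquareOrCube_of_thirty_le_length {w : List (Fin 2)} (hw : 30 ≤ w.length) :
    w.HasLongSquareOrCube := by
  obtain ⟨p, hpw, hp⟩ := exists_prefix_of_survivors_eq_nil (by decide)
    survivors_hasSquareOrCubeSuffix_thirty hw
  exact hp.hasLongSquareOrCube.mono hpw.isInfix

end List

theorem FactorOf.of_infix_map_range {α : Type*} {u : List α} {w : ℕ → α} {n : ℕ}
    (h : u <:+: (List.range n).map w) : FactorOf u w := by
  obtain ⟨s, t, hst⟩ := h
  refine ⟨s.length, List.ext_getElem (by simp) fun j hj _ => ?_⟩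
  have hlen : s.length + (u.length + t.length) = n := by simpa using congrArg List.length hst
  have huj : u[j]? = w (s.length + j) := by
    simpa [List.getElem?_append_right, List.getElem?_append_left hj,
      List.getElem?_range (by omega : s.length + j < n)] using congrArg (·[s.length + j]?) hst
  simpa [List.getElem?_eq_getElem hj] using huj

theorem no_infinite_word_avoiding_squares_ge_three_and_cubes :
    (∀ w : ℕ → Fin 2,
      (∃ y : List (Fin 2), 3 ≤ y.length ∧ FactorOf (y ++ y) w) ∨
      (∃ x : List (Fin 2), x ≠ [] ∧ FactorOf (x ++ x ++ x) w)) ∧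
    (∀ w : List (Fin 2), 30 ≤ w.length →
      (∃ y : List (Fin 2), 3 ≤ y.length ∧ (y ++ y) <:+: w) ∨
      (∃ x : List (Fin 2), x ≠ [] ∧ (x ++ x ++ x) <:+: w)) := by
  refine ⟨fun w => ?_, fun w => List.hasLongSquareOrCube_of_thirty_le_length⟩
  rcases List.hasLongSquareOrCube_of_thirty_le_length (w := (List.range 30).map w) (by simp) with
    ⟨y, hy, hyw⟩ | ⟨x, hx, hxw⟩
  exacts [Or.inl ⟨y, hy, .of_infix_map_range hyw⟩, Or.inr ⟨x, hx, .of_infix_map_range hxw⟩]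
end

section
/- Let f: {0,1,2}* → {0,1}* be the 10-uniform morphism with f(0)=0010111010, f(1)=0010101110, f(2)=0011101010. Then f satisfies the inclusion property: if f(ab) = t·f(c)·u for letters a,b,c ∈ {0,1,2} and words t,u, then t = ε or u = ε. -/
def f : Fin 3 → List (Fin 2)
  | 0 => [0,0,1,0,1,1,1,0,1,0]
  | 1 => [0,0,1,0,1,0,1,1,1,0]
  | 2 => [0,0,1,1,1,0,1,0,1,0]

lemma flen : ∀ a : Fin 3, (f a).length = 10 := by decide

lemma key : ∀ a b c : Fin 3, ∀ n : Fin 11,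
    ((f a ++ f b).drop n).take 10 = f c → n.val = 0 ∨ n.val = 10 := by decide

theorem f_inclusion_property :
    ∀ (a b c : Fin 3) (t u : List (Fin 2)),
      f a ++ f b = t ++ f c ++ u → t = [] ∨ u = [] := by
  intro a b c t u h
  have hlen : t.length + ((f c).length + u.length) = (f a).length + (f b).length := by
    have := congrArg List.length h
    simpa [List.length_append] using this.symm
  rw [flen, flen, flen] at hlen
  have ht10 : t.length ≤ 10 := by omega
  have hdrop : (f a ++ f b).drop t.length = f c ++ u := by
    rw [List.append_assoc] at h
    rw [h]
    simp
  have htake : ((f a ++ f b).drop t.length).take 10 = f c := by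
    rw [hdrop, List.take_append_of_le_length (by rw [flen]),
      List.take_of_length_le (by rw [flen])]
  have := key a b c ⟨t.length, by omega⟩ htake
  simp at this
  rcases this with h0 | h10
  · left; exact h0
  · right; exact List.eq_nil_of_length_eq_zero (by omega)
end

section
/- Let f: {0,1,2}* → {0,1}* be the 10-uniform morphism with f(0)=0010111010, f(1)=0010101110, f(2)=0011101010. Then f satisfies the interchange property: if there exist letters a,b,c and words s,t,u,v with f(a)=st, f(b)=uv, and f(c)=sv, then a = c or b = c. -/
lemma f_key : ∀ (a b c : Fin 3) (n : Fin 11),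
    (f a).take n ++ (f b).drop n = f c → a = c ∨ b = c := by decide

theorem f_interchange_property :
    ∀ (a b c : Fin 3) (s t u v : List (Fin 2)),
      f a = s ++ t → f b = u ++ v → f c = s ++ v → a = c ∨ b = c := by
  intro a b c s t u v ha hb hc
  have la : (f a).length = 10 := by fin_cases a <;> rfl
  have lb : (f b).length = 10 := by fin_cases b <;> rfl
  have lc : (f c).length = 10 := by fin_cases c <;> rfl
  have h1 : s.length + t.length = 10 := by rw [← List.length_append, ← ha, la]
  have h2 : u.length + v.length = 10 := by rw [← List.length_append, ← hb, lb]
  have h3 : s.length + v.length = 10 := by rw [← List.length_append, ← hc, lc]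
  have hu : u.length = s.length := by omega
  have hs : (f a).take s.length = s := by rw [ha, List.take_left]
  have hv : (f b).drop s.length = v := by rw [hb, ← hu, List.drop_left]
  have hn : s.length ≤ 10 := by omega
  have := f_key a b c ⟨s.length, by omega⟩ (by simpa [hs, hv] using hc.symm)
  exact this
end

section
/- Let f: {0,1,2}* → {0,1}* be the morphism with f(0)=0010111010, f(1)=0010101110, f(2)=0011101010. If w is any squarefree word over {0,1,2}, then f(w) contains no square yy with |y| ≥ 3 and no factor x^e with rational exponent e > 3. -/
/-- A word is squarefree if it contains no nonempty factor of the form `y ++ y`. -/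
def SquarefreeWord {α : Type*} (w : List α) : Prop :=
  ∀ y : List α, y ≠ [] → ¬ (y ++ y) <:+: w

/-- `x` is an `e`-th power: `x = yⁿy'` with `y'` a prefix of `y` and `n + |y'|/|y| = e`. -/
def IsPow {α : Type*} (e : ℚ) (x : List α) : Prop :=
  ∃ (y y' : List α) (n : ℕ), y ≠ [] ∧ y' <+: y ∧
    x = (List.replicate n y).flatten ++ y' ∧
    (n : ℚ) + (y'.length : ℚ) / (y.length : ℚ) = e

namespace Avoid

abbrev F (w : List (Fin 3)) : List (Fin 2) := w.flatMap f

lemma len_f (a : Fin 3) : (f a).length = 10 := by fin_cases a <;> rfl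

lemma len_F (w : List (Fin 3)) : (F w).length = 10 * w.length := by
  induction w with
  | nil => rfl
  | cons a t ih =>
    show ((a :: t).flatMap f).length = _
    rw [List.flatMap_cons, List.length_append, len_f]
    show 10 + (F t).length = _
    rw [ih, List.length_cons]; ring

lemma F_cons (a : Fin 3) (t : List (Fin 3)) : F (a :: t) = f a ++ F t :=
  List.flatMap_cons ..

lemma F_block (w : List (Fin 3)) {k : ℕ} (hk : k < w.length) :
    ((F w).drop (10*k)).take 10 = f w[k] := by
  induction w generalizing k with
  | nil => simp at hk
  | cons a t ih =>
    rw [F_cons]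
    cases k with
    | zero =>
      simp only [Nat.mul_zero, List.drop_zero, List.getElem_cons_zero]
      exact List.take_left' (len_f a)
    | succ k =>
      rw [show 10*(k+1) = 10 + 10*k by ring, ← List.drop_drop,
        List.drop_left' (len_f a), List.getElem_cons_succ]
      exact ih (by simpa using hk)

lemma F_get (w : List (Fin 3)) {k : ℕ} (hk : k < w.length) {j : ℕ} (hj : j < 10) :
    (F w)[10*k + j]? = (f w[k])[j]? := by
  have h := F_block w hk
  calc (F w)[10*k + j]? = ((F w).drop (10*k))[j]? := List.getElem?_drop.symm
    _ = (((F w).drop (10*k)).take 10)[j]? := by rw [List.getElem?_take, if_pos hj]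
    _ = (f w[k])[j]? := by rw [h]

/-- slice of a list -/
def seg {α : Type*} (l : List α) (i m : ℕ) : List α := (l.drop i).take m

lemma seg_get {α : Type*} (l : List α) {i m t : ℕ} (ht : t < m) :
    (seg l i m)[t]? = l[i+t]? := by
  rw [seg, List.getElem?_take, if_pos ht, List.getElem?_drop]

lemma seg_len {α : Type*} (l : List α) {i m : ℕ} (h : i + m ≤ l.length) :
    (seg l i m).length = m := by
  rw [seg, List.length_take, List.length_drop]; omega

lemma seg_infix {α : Type*} (l : List α) (i m : ℕ) : seg l i m <:+: l :=
  ((List.take_prefix _ _).isInfix).trans (List.drop_suffix i l).isInfix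

lemma seg_add {α : Type*} (l : List α) (i m n : ℕ) :
    seg l i (m + n) = seg l i m ++ seg l (i + m) n := by
  rw [seg, List.take_add, List.drop_drop]; rfl

lemma infix_seg {α : Type*} {x l : List α} (h : x <:+: l) :
    ∃ i, i + x.length ≤ l.length ∧ x = seg l i x.length := by
  obtain ⟨s, t, e⟩ := h
  refine ⟨s.length, ?_, ?_⟩
  · rw [← e]; simp only [List.length_append]; omega
  · rw [← e, seg, List.append_assoc, List.drop_left' rfl, List.take_left' rfl]

lemma seg_eq {α : Type*} {l : List α} {i j m : ℕ} (hi : i + m ≤ l.length)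
    (hj : j + m ≤ l.length) (h : ∀ t, t < m → l[i+t]? = l[j+t]?) :
    seg l i m = seg l j m := by
  apply List.ext_getElem?
  intro t
  by_cases ht : t < m
  · rw [seg_get l ht, seg_get l ht, h t ht]
  · rw [List.getElem?_eq_none (by rw [seg_len l hi]; omega),
      List.getElem?_eq_none (by rw [seg_len l hj]; omega)]

lemma not_sqf {α : Type*} {l : List α} {s m : ℕ} (hm : 0 < m)
    (hlen : s + 2*m ≤ l.length) (h : seg l s m = seg l (s+m) m)
    (hsf : SquarefreeWord l) : False := by
  apply hsf (seg l s m)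
  · intro hnil
    have := seg_len l (show s + m ≤ l.length by omega)
    rw [hnil] at this; simp at this; omega
  · have e : seg l s (m + m) = seg l s m ++ seg l s m := by
      rw [seg_add, ← h]
    rw [← e]; exact seg_infix l s (m+m)

lemma sqf_infix {α : Type*} {v w : List α} (hsf : SquarefreeWord w)
    (h : v <:+: w) : SquarefreeWord v := fun y hy hyy => hsf y hy (hyy.trans h)


lemma sync_check : ∀ (a b c : Fin 3), b ≠ c → ∀ r : Fin 10, r.val ≠ 0 →
    f a ≠ (f b).drop r.val ++ (f c).take r.val := by decide

lemma f_inj : ∀ a b : Fin 3, f a = f b → a = b := by decide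

lemma suff_check : ∀ b c : Fin 3, b ≠ c → ∀ r : Fin 10, r.val ≤ 5 →
    (f b).drop r.val ≠ (f c).drop r.val := by decide

lemma pref_check : ∀ b c : Fin 3, b ≠ c → ∀ r : Fin 10, 6 ≤ r.val →
    (f b).take r.val ≠ (f c).take r.val := by decide

lemma adj_ne {w : List (Fin 3)} (hsf : SquarefreeWord w) {q : ℕ} (hq : q + 1 < w.length) :
    w[q] ≠ w[q+1] := by
  intro he
  refine not_sqf (l := w) (s := q) (m := 1) one_pos (by omega)
    (seg_eq (by omega) (by omega) ?_) hsf
  intro t ht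
  interval_cases t
  simp only [Nat.add_zero]
  rw [List.getElem?_eq_getElem (by omega), List.getElem?_eq_getElem (by omega)]
  exact congrArg some he

lemma sync {w : List (Fin 3)} (hsf : SquarefreeWord w) (a : Fin 3) (p : ℕ)
    (hocc : ∀ t, t < 10 → (F w)[p+t]? = (f a)[t]?) : p % 10 = 0 := by
  by_contra hr
  have hq : p = 10 * (p/10) + p % 10 := by omega
  set q := p / 10 with hqdef
  set r := p % 10 with hrdef
  have hr9 : r < 10 := by omega
  have hr1 : 1 ≤ r := by omega
  have hlen : p + 9 < (F w).length := by
    by_contra hl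
    push_neg at hl
    have h9 := hocc 9 (by omega)
    rw [List.getElem?_eq_none (by omega),
      List.getElem?_eq_getElem (show 9 < (f a).length by rw [len_f]; omega)] at h9
    exact nomatch h9
  have hw : q + 1 < w.length := by rw [len_F] at hlen; omega
  have key : f a = (f w[q]).drop r ++ (f w[q+1]).take r := by
    apply List.ext_getElem?
    intro t
    by_cases ht : t < 10
    · rw [← hocc t ht]
      by_cases h2 : r + t < 10
      · rw [show p + t = 10*q + (r+t) by omega, F_get w (by omega) h2,
          List.getElem?_append, List.length_drop, len_f, if_pos (by omega),
          List.getElem?_drop]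
      · rw [show p + t = 10*(q+1) + (r+t-10) by omega, F_get w hw (by omega),
          List.getElem?_append, List.length_drop, len_f, if_neg (by omega),
          List.getElem?_take, if_pos (by omega)]
        congr 1
        omega
    · rw [List.getElem?_eq_none (by rw [len_f]; omega),
        List.getElem?_eq_none (by
          simp only [List.length_append, List.length_drop, List.length_take, len_f]
          omega)]
  exact sync_check a w[q] w[q+1] (adj_ne hsf hw) ⟨r, hr9⟩ hr key


lemma f_eq_of_ptwise {w : List (Fin 3)} {k k' : ℕ} (hk : k < w.length) (hk' : k' < w.length)
    (h : ∀ t, t < 10 → (F w)[10*k+t]? = (F w)[10*k'+t]?) : w[k] = w[k'] := by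
  apply f_inj
  apply List.ext_getElem?
  intro t
  by_cases ht : t < 10
  · rw [← F_get w hk ht, ← F_get w hk' ht]; exact h t ht
  · rw [List.getElem?_eq_none (by rw [len_f]; omega),
      List.getElem?_eq_none (by rw [len_f]; omega)]

set_option maxHeartbeats 2000000 in
lemma long {w : List (Fin 3)} (hsf : SquarefreeWord w) (y : List (Fin 2))
    (h19 : 19 ≤ y.length) (hyy : (y ++ y) <:+: F w) : False := by
  obtain ⟨i, hilen, hseg⟩ := infix_seg hyy
  set n := y.length with hn
  have hseg2 : y ++ y = seg (F w) i (n+n) := by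
    rw [hseg]; congr 1; simp [List.length_append, hn]
  have hlen2 : i + 2*n ≤ 10 * w.length := by
    rw [← len_F]; simp only [List.length_append] at hilen; omega
  have E : ∀ d, d < n → (F w)[i+d]? = (F w)[i+n+d]? := by
    intro d hd
    calc (F w)[i+d]? = (seg (F w) i (n+n))[d]? := (seg_get _ (by omega)).symm
      _ = (y++y)[d]? := by rw [← hseg2]
      _ = y[d]? := by rw [List.getElem?_append, if_pos (by omega)]
      _ = (y++y)[n+d]? := by
          rw [List.getElem?_append_right (by omega)]; congr 1; omega
      _ = (seg (F w) i (n+n))[n+d]? := by rw [hseg2]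
      _ = (F w)[i+(n+d)]? := seg_get _ (by omega)
      _ = (F w)[i+n+d]? := by congr 1; omega
  -- Step 1: |y| is a multiple of 10
  set j := (10 - i % 10) % 10 with hj
  obtain ⟨k0, hk0⟩ : ∃ k0, 10 * k0 = i + j := ⟨(i+j)/10, by omega⟩
  have hk0w : k0 < w.length := by omega
  have hsync : (i + n + j) % 10 = 0 := by
    apply sync hsf w[k0] (i+n+j)
    intro t ht
    calc (F w)[i+n+j+t]? = (F w)[i+n+(j+t)]? := by congr 1; omega
      _ = (F w)[i+(j+t)]? := (E (j+t) (by omega)).symm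
      _ = (F w)[10*k0 + t]? := by congr 1; omega
      _ = (f w[k0])[t]? := F_get w hk0w ht
  obtain ⟨m, hm⟩ : ∃ m, n = 10 * m := ⟨n/10, by omega⟩
  have hm2 : 2 ≤ m := by omega
  set q := i / 10 with hqd
  set r := i % 10 with hrd
  -- blocks fully inside the first copy of y are repeated m blocks later
  have hfull : ∀ k, i ≤ 10*k → 10*k + 10 ≤ i + n → w[k]? = w[k+m]? := by
    intro k h1 h2
    have hkw : k + m < w.length := by omega
    have he : w[k] = w[k+m] := by
      apply f_eq_of_ptwise (w:=w) (by omega) hkw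
      intro t ht
      calc (F w)[10*k+t]? = (F w)[i + (10*k+t-i)]? := by congr 1; omega
        _ = (F w)[i+n+(10*k+t-i)]? := E _ (by omega)
        _ = (F w)[10*(k+m)+t]? := by congr 1; omega
    have hk1 : k < w.length := by omega
    rw [List.getElem?_eq_getElem hk1, List.getElem?_eq_getElem hkw]
    exact congrArg some he
  by_cases hr5 : r ≤ 5
  · -- boundary blocks share a long common suffix
    have hqw : q + m < w.length := by omega
    have hbd : w[q] = w[q+m] := by
      by_contra hne
      apply suff_check w[q] w[q+m] hne ⟨r, by omega⟩ hr5
      apply List.ext_getElem?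
      intro t
      by_cases ht : t < 10 - r
      · calc ((f w[q]).drop r)[t]? = (f w[q])[r+t]? := List.getElem?_drop
          _ = (F w)[10*q + (r+t)]? := (F_get w (by omega) (by omega)).symm
          _ = (F w)[i+t]? := by congr 1; omega
          _ = (F w)[i+n+t]? := E t (by omega)
          _ = (F w)[10*(q+m) + (r+t)]? := by congr 1; omega
          _ = (f w[q+m])[r+t]? := F_get w hqw (by omega)
          _ = ((f w[q+m]).drop r)[t]? := List.getElem?_drop.symm
      · rw [List.getElem?_eq_none (by simp only [List.length_drop, len_f]; omega),
          List.getElem?_eq_none (by simp only [List.length_drop, len_f]; omega)]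
    refine not_sqf (l:=w) (s:=q) (m:=m) (by omega) (by omega)
      (seg_eq (by omega) (by omega) ?_) hsf
    intro t ht
    by_cases ht0 : t = 0
    · subst ht0
      have h1 : q < w.length := by omega
      have h2 : q + m < w.length := by omega
      simp only [Nat.add_zero]
      rw [List.getElem?_eq_getElem h1, List.getElem?_eq_getElem h2]
      exact congrArg some hbd
    · calc w[q+t]? = w[q+t+m]? := hfull (q+t) (by omega) (by omega)
        _ = w[q+m+t]? := by congr 1; omega
  · -- boundary blocks share a long common prefix
    have hq2w : q + 2*m < w.length := by omega
    have hbd : w[q+m] = w[q+2*m] := by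
      by_contra hne
      apply pref_check w[q+m] w[q+2*m] hne ⟨r, by omega⟩ (show 6 ≤ r by omega)
      apply List.ext_getElem?
      intro t
      by_cases ht : t < r
      · calc ((f w[q+m]).take r)[t]? = (f w[q+m])[t]? := by rw [List.getElem?_take, if_pos ht]
          _ = (F w)[10*(q+m)+t]? := (F_get w (by omega) (by omega)).symm
          _ = (F w)[i + (n-r+t)]? := by congr 1; omega
          _ = (F w)[i+n+(n-r+t)]? := E _ (by omega)
          _ = (F w)[10*(q+2*m)+t]? := by congr 1; omega
          _ = (f w[q+2*m])[t]? := F_get w hq2w (by omega)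
          _ = ((f w[q+2*m]).take r)[t]? := by rw [List.getElem?_take, if_pos ht]
      · rw [List.getElem?_eq_none (by simp only [List.length_take, len_f]; omega),
          List.getElem?_eq_none (by simp only [List.length_take, len_f]; omega)]
    refine not_sqf (l:=w) (s:=q+1) (m:=m) (by omega) (by omega)
      (seg_eq (by omega) (by omega) ?_) hsf
    intro t ht
    by_cases htm : t = m - 1
    · have h1 : q + m < w.length := by omega
      have h2 : q + 2*m < w.length := by omega
      rw [show q+1+t = q+m by omega, show q+1+m+t = q+2*m by omega,
        List.getElem?_eq_getElem h1, List.getElem?_eq_getElem h2]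
      exact congrArg some hbd
    · calc w[q+1+t]? = w[q+1+t+m]? := hfull (q+1+t) (by omega) (by omega)
        _ = w[q+1+m+t]? := by congr 1; omega


lemma F_drop (w : List (Fin 3)) (q : ℕ) : F (w.drop q) = (F w).drop (10*q) := by
  induction w generalizing q with
  | nil => simp
  | cons a t ih =>
    cases q with
    | zero => simp
    | succ q =>
      rw [List.drop_succ_cons, F_cons, show 10*(q+1) = 10 + 10*q by ring,
        ← List.drop_drop, List.drop_left' (len_f a)]
      exact ih q

lemma F_take (w : List (Fin 3)) (k : ℕ) : F (w.take k) = (F w).take (10*k) := by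
  induction w generalizing k with
  | nil => simp
  | cons a t ih =>
    cases k with
    | zero => simp [F]
    | succ k =>
      rw [List.take_succ_cons, F_cons, F_cons, ih k,
        show 10*(k+1) = (f a).length + 10*k by rw [len_f]; ring, List.take_length_add_append]

lemma window {w : List (Fin 3)} (hsf : SquarefreeWord w) {x : List (Fin 2)}
    (hx : x <:+: F w) (hlen : x.length ≤ 41) :
    ∃ v : List (Fin 3), SquarefreeWord v ∧ v.length ≤ 5 ∧ x <:+: F v := by
  obtain ⟨i, hi, hseg⟩ := infix_seg hx
  rw [len_F] at hi
  set q := i / 10 with hq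
  set v := (w.drop q).take 5 with hv
  have hvinf : v <:+: w :=
    ((List.take_prefix _ _).isInfix).trans (List.drop_suffix q w).isInfix
  have hFv : F v = seg (F w) (10*q) 50 := by
    rw [hv, F_take, F_drop]; rfl
  have hFvlen : (i - 10*q) + x.length ≤ (F v).length := by
    rw [hFv, seg, List.length_take, List.length_drop, len_F]
    exact le_inf (by omega) (by omega)
  have hx2 : x = seg (F v) (i - 10*q) x.length := by
    apply List.ext_getElem?
    intro t
    by_cases ht : t < x.length
    · calc x[t]? = (seg (F w) i x.length)[t]? := by rw [← hseg]
        _ = (F w)[i+t]? := seg_get _ ht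
        _ = (F w)[10*q + ((i-10*q)+t)]? := by congr 1; omega
        _ = (seg (F w) (10*q) 50)[(i-10*q)+t]? := (seg_get _ (by omega)).symm
        _ = (F v)[(i-10*q)+t]? := by rw [← hFv]
        _ = (seg (F v) (i-10*q) x.length)[t]? := (seg_get _ ht).symm
    · rw [List.getElem?_eq_none (by omega),
        List.getElem?_eq_none (by rw [seg_len _ hFvlen]; omega)]
  refine ⟨v, sqf_infix hsf hvinf, ?_, ?_⟩
  · rw [hv, List.length_take]; omega
  · rw [hx2]; exact seg_infix _ _ _

def allW : ℕ → List (List (Fin 3))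
  | 0 => [[]]
  | n+1 => (allW n).flatMap (fun v => [0 :: v, 1 :: v, 2 :: v])

lemma mem_allW : ∀ v : List (Fin 3), v ∈ allW v.length := by
  intro v
  induction v with
  | nil => simp [allW]
  | cons a t ih =>
    show a :: t ∈ allW (t.length + 1)
    rw [allW, List.mem_flatMap]
    exact ⟨t, ih, by fin_cases a <;> simp⟩

def allLe5 : List (List (Fin 3)) := (List.range 6).flatMap allW

lemma mem_allLe5 {v : List (Fin 3)} (h : v.length ≤ 5) : v ∈ allLe5 := by
  rw [allLe5, List.mem_flatMap]
  exact ⟨v.length, by rw [List.mem_range]; omega, mem_allW v⟩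

def sqB (l : List (Fin 2)) : Bool :=
  (List.range l.length).all fun i => (List.range 19).all fun m =>
    decide (m < 3) || decide (l.length < i + 2*m) || decide (seg l i m ≠ seg l (i+m) m)

def pats : List (List (Fin 2)) := [[0,0,0,0],[1,1,1,1],[0,1,0,1,0,1,0],[1,0,1,0,1,0,1]]

def patB (l : List (Fin 2)) : Bool :=
  (List.range l.length).all fun i => pats.all fun p => decide (seg l i p.length ≠ p)

def sfB (v : List (Fin 3)) : Bool :=
  (List.range (v.length+1)).all fun i => (List.range (v.length+1)).all fun m =>
    decide (m = 0) || decide (v.length < i + 2*m) || decide (seg v i m ≠ seg v (i+m) m)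

def goodB (v : List (Fin 3)) : Bool := sqB (F v) && patB (F v)

lemma sfB_of {v : List (Fin 3)} (hsf : SquarefreeWord v) : sfB v = true := by
  rw [sfB]
  simp only [List.all_eq_true, List.mem_range, Bool.or_eq_true, decide_eq_true_eq]
  intro i hi m hm
  by_cases h0 : m = 0
  · exact Or.inl (Or.inl h0)
  by_cases h1 : v.length < i + 2*m
  · exact Or.inl (Or.inr h1)
  exact Or.inr fun he => not_sqf (by omega) (by omega) he hsf

lemma of_sqB {l : List (Fin 2)} (h : sqB l = true) {y : List (Fin 2)}
    (h3 : 3 ≤ y.length) (h18 : y.length ≤ 18) (hin : (y++y) <:+: l) : False := by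
  obtain ⟨i, hi, hseg⟩ := infix_seg hin
  rw [sqB] at h
  simp only [List.all_eq_true, List.mem_range, Bool.or_eq_true, decide_eq_true_eq] at h
  set n := y.length with hn
  have hlen : i + 2*n ≤ l.length := by
    simp only [List.length_append] at hi; omega
  rcases h i (by omega) n (by omega) with (h' | h') | h'
  · omega
  · omega
  · apply h'
    have e := seg_add l i n n
    rw [← (show y ++ y = seg l i (n+n) by
      rw [hseg]; congr 1; simp [List.length_append, hn])] at e
    obtain ⟨e1, e2⟩ := List.append_inj e (by rw [seg_len l (by omega)])
    exact e1.symm.trans e2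

lemma of_patB {l : List (Fin 2)} (h : patB l = true) {p : List (Fin 2)}
    (hp : p ∈ pats) (hpne : 0 < p.length) (hin : p <:+: l) : False := by
  obtain ⟨i, hi, hseg⟩ := infix_seg hin
  rw [patB] at h
  simp only [List.all_eq_true, List.mem_range, decide_eq_true_eq] at h
  exact h i (by omega) p hp hseg.symm

set_option maxHeartbeats 40000000 in
lemma master : ∀ v ∈ allLe5.filter sfB, goodB v = true := by decide

lemma part1 {w : List (Fin 3)} (hsf : SquarefreeWord w) (y : List (Fin 2))
    (h3 : 3 ≤ y.length) : ¬ (y ++ y) <:+: F w := by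
  intro hyy
  by_cases h18 : y.length ≤ 18
  · obtain ⟨v, hv, hv5, hxv⟩ := window hsf hyy (by simp only [List.length_append]; omega)
    have hm := master v (List.mem_filter.mpr ⟨mem_allLe5 hv5, sfB_of hv⟩)
    rw [goodB, Bool.and_eq_true] at hm
    exact of_sqB hm.1 h3 h18 hxv
  · exact long hsf y (by omega) hyy

lemma no_pat {w : List (Fin 3)} (hsf : SquarefreeWord w) {p : List (Fin 2)}
    (hp : p ∈ pats) (hin : p <:+: F w) : False := by
  have hlen : 0 < p.length ∧ p.length ≤ 41 := by
    fin_cases hp <;> exact ⟨by norm_num, by norm_num⟩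
  obtain ⟨v, hv, hv5, hxv⟩ := window hsf hin hlen.2
  have hm := master v (List.mem_filter.mpr ⟨mem_allLe5 hv5, sfB_of hv⟩)
  rw [goodB, Bool.and_eq_true] at hm
  exact of_patB hm.2 hp hlen.1 hxv

lemma part2 {w : List (Fin 3)} (hsf : SquarefreeWord w) (x : List (Fin 2)) (e : ℚ)
    (he : 3 < e) (hpow : IsPow e x) (hin : x <:+: F w) : False := by
  obtain ⟨y, y', n, hy, hy', hx, hsum⟩ := hpow
  have hyl : 0 < y.length := List.length_pos_iff.mpr hy
  have hle : y'.length ≤ y.length := hy'.length_le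
  have hn3 : 3 ≤ n := by
    have h1 : (y'.length : ℚ) / (y.length : ℚ) ≤ 1 := by
      rw [div_le_one (by exact_mod_cast hyl)]
      exact_mod_cast hle
    rw [← hsum] at he
    have h2 : (2:ℚ) < (n:ℚ) := by linarith
    have h2' : 2 < n := by exact_mod_cast h2
    omega
  have hrep : ∀ k, (List.replicate (k+1) y).flatten = y ++ (List.replicate k y).flatten := by
    intro k; simp [List.replicate_succ]
  have hsplit : ∀ R : List (Fin 2), y ++ R = y.take 1 ++ (y.drop 1 ++ R) := by
    intro R; rw [← List.append_assoc, List.take_append_drop]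
  have hkey : ∃ u, x = y ++ (y ++ (y ++ (y.take 1 ++ u))) := by
    by_cases h4 : 4 ≤ n
    · refine ⟨y.drop 1 ++ ((List.replicate (n-4) y).flatten ++ y'), ?_⟩
      rw [hx, show n = (n-4)+1+1+1+1 by omega, hrep, hrep, hrep, hrep, ← hsplit]
      simp [List.append_assoc]
    · have hn4 : n = 3 := by omega
      have hy'ne : y' ≠ [] := by
        intro h0
        rw [h0, hn4] at hsum
        simp at hsum
        rw [← hsum] at he
        norm_num at he
      obtain ⟨t, hyt⟩ := hy'
      have ht1 : y.take 1 = y'.take 1 := by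
        rw [← hyt, List.take_append_of_le_length (by
          have := List.length_pos_iff.mpr hy'ne; omega)]
      refine ⟨y'.drop 1, ?_⟩
      rw [hx, show n = 0+1+1+1 by omega, hrep, hrep, hrep, ht1, List.take_append_drop]
      simp [List.append_assoc]
  obtain ⟨u, hu⟩ := hkey
  have hz : (y ++ (y ++ (y ++ y.take 1))) <:+: F w := by
    refine List.IsInfix.trans ⟨[], u, ?_⟩ hin
    rw [hu]; simp [List.append_assoc]
  rcases y with _ | ⟨a, y0⟩
  · exact hy rfl
  rcases y0 with _ | ⟨b, y1⟩
  · -- y = [a]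
    simp only [List.take_succ_cons, List.take_zero] at hz
    fin_cases a
    · exact no_pat hsf (p := [0,0,0,0]) (by simp [pats]) (by simpa using hz)
    · exact no_pat hsf (p := [1,1,1,1]) (by simp [pats]) (by simpa using hz)
  rcases y1 with _ | ⟨c, y2⟩
  · -- y = [a,b]
    simp only [List.take_succ_cons, List.take_zero] at hz
    fin_cases a <;> fin_cases b
    · -- [0,0]
      refine no_pat hsf (p := [0,0,0,0]) (by simp [pats]) ?_
      refine List.IsInfix.trans ?_ (by simpa using hz)
      decide
    · -- [0,1]
      exact no_pat hsf (p := [0,1,0,1,0,1,0]) (by simp [pats]) (by simpa using hz)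
    · -- [1,0]
      exact no_pat hsf (p := [1,0,1,0,1,0,1]) (by simp [pats]) (by simpa using hz)
    · -- [1,1]
      refine no_pat hsf (p := [1,1,1,1]) (by simp [pats]) ?_
      refine List.IsInfix.trans ?_ (by simpa using hz)
      decide
  · -- |y| ≥ 3
    refine part1 hsf (a :: b :: c :: y2) (by simp) ?_
    refine List.IsInfix.trans ⟨[], (a :: b :: c :: y2) ++ (a :: b :: c :: y2).take 1, ?_⟩ hz
    simp [List.append_assoc]

end Avoid

theorem f_image_of_squarefree_avoids :
    ∀ w : List (Fin 3), SquarefreeWord w →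
      (∀ y : List (Fin 2), 3 ≤ y.length → ¬ (y ++ y) <:+: w.flatMap f) ∧
      (∀ (x : List (Fin 2)) (e : ℚ), 3 < e → IsPow e x → ¬ x <:+: w.flatMap f) := by
  intro w hsf
  exact ⟨fun y h3 => Avoid.part1 hsf y h3,
    fun x e he hp hin => Avoid.part2 hsf x e he hp hin⟩
end

section
/- There exists an infinite binary word that simultaneously avoids all squares yy with |y| ≥ 3 and all fractional powers x^e with rational e > 3. -/
namespace Avoid37

/-- The Thue–Morse sequence. -/
def tm : ℕ → Bool
  | 0 => false
  | (n+1) =>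
    if (n+1) % 2 = 0 then tm ((n+1)/2) else !tm ((n+1)/2)
decreasing_by all_goals exact Nat.div_lt_self (Nat.succ_pos n) one_lt_two

lemma tm_even (n : ℕ) : tm (2*n) = tm n := by
  rcases n with _ | m
  · rfl
  · rw [show 2*(m+1) = (2*m+1)+1 by ring, tm]
    rw [if_pos (by omega), show (2*m+1+1)/2 = m+1 by omega]

lemma tm_odd (n : ℕ) : tm (2*n+1) = !tm n := by
  rw [show 2*n+1 = (2*n)+1 by ring, tm]
  rw [if_neg (by omega), show (2*n+1)/2 = n by omega]

/-- No `aaa` in Thue–Morse. -/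
lemma tm_no_aaa (m : ℕ) : ¬ (tm m = tm (m+1) ∧ tm (m+1) = tm (m+2)) := by
  rintro ⟨h1, h2⟩
  rcases Nat.even_or_odd m with ⟨j, hj⟩ | ⟨j, hj⟩
  · subst hj
    rw [show j+j = 2*j by ring] at h1
    rw [show 2*j+1 = 2*j+1 by ring, tm_even, tm_odd] at h1
    simp at h1
  · subst hj
    rw [show 2*j+1+1 = 2*(j+1) by ring, show 2*j+1+2 = 2*(j+1)+1 by ring,
      tm_even, tm_odd] at h2
    simp at h2

/-- Thue–Morse has no repetition of period `q` and length `2q+1` (overlap-freeness). -/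
lemma tm_no_overlap : ∀ q, 1 ≤ q → ∀ i, ¬ (∀ s, s ≤ q → tm (i+s) = tm (i+q+s)) := by
  intro q
  induction q using Nat.strong_induction_on with
  | _ q IH =>
    intro hq i h
    rcases Nat.even_or_odd q with ⟨r, hr⟩ | ⟨r, hr⟩
    · -- q = 2r even
      have hr1 : 1 ≤ r := by omega
      rcases Nat.even_or_odd i with ⟨m, hm⟩ | ⟨m, hm⟩
      · refine IH r (by omega) hr1 m (fun σ hσ => ?_)
        have := h (2*σ) (by omega)
        rwa [show i + 2*σ = 2*(m+σ) by omega, show i + q + 2*σ = 2*(m+σ+r) by omega,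
          tm_even, tm_even, show m+σ+r = m+r+σ by ring] at this
      · refine IH r (by omega) hr1 m (fun σ hσ => ?_)
        rcases Nat.eq_zero_or_pos σ with h0 | h0
        · have := h 0 (by omega)
          rw [show i + 0 = 2*m+1 by omega, show i + q + 0 = 2*(m+r)+1 by omega,
            tm_odd, tm_odd] at this
          simpa [h0] using this
        · have := h (2*σ-1) (by omega)
          rwa [show i + (2*σ-1) = 2*(m+σ) by omega,
            show i + q + (2*σ-1) = 2*(m+σ+r) by omega,
            tm_even, tm_even, show m+σ+r = m+r+σ by ring] at this
    · -- q = 2r+1 odd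
      rcases Nat.lt_or_ge q 3 with h3 | h3
      · -- q = 1
        have hq1 : q = 1 := by omega
        subst hq1
        exact tm_no_aaa i ⟨by simpa using h 0 (by omega),
          by have := h 1 (by omega); simpa [show i+1+1 = i+2 by ring] using this⟩
      · have hr1 : 1 ≤ r := by omega
        set m0 := (i+1)/2 with hm0
        have key : ∀ m, i ≤ 2*m+1 → 2*m+2 ≤ i+q → tm (m+1) = tm m := by
          intro m h1 h2
          have e2 := h (2*m+1-i) (by omega)
          have e3 := h (2*m+2-i) (by omega)
          rw [show i + (2*m+1-i) = 2*m+1 by omega,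
            show i + q + (2*m+1-i) = 2*(m+r+1) by omega, tm_odd, tm_even] at e2
          rw [show i + (2*m+2-i) = 2*(m+1) by omega,
            show i + q + (2*m+2-i) = 2*(m+r+1)+1 by omega, tm_even, tm_odd] at e3
          rw [e3, ← e2]
          simp
        rcases Nat.lt_or_ge r 2 with hr2 | hr2
        · -- r = 1, q = 3
          have e1 := h (2*m0-i) (by omega)
          rw [show i + (2*m0-i) = 2*m0 by omega,
            show i + q + (2*m0-i) = 2*(m0+1)+1 by omega, tm_even, tm_odd] at e1
          have e23 := key m0 (by omega) (by omega)
          rw [e23] at e1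
          simp at e1
        · -- r ≥ 2
          exact tm_no_aaa m0 ⟨(key m0 (by omega) (by omega)).symm,
            (key (m0+1) (by omega) (by omega)).symm⟩

/-- The code: four binary blocks of length 7, indexed by pairs of booleans. -/
def C : Bool → Bool → List (Fin 2)
  | false, false => [0,0,1,0,1,1,1]
  | false, true  => [0,1,0,1,0,0,1]
  | true,  false => [1,0,1,0,1,1,0]
  | true,  true  => [1,1,0,1,0,0,0]

def blockAt (m : ℕ) : List (Fin 2) := C (tm m) (tm (m+1))

/-- The infinite word avoiding large squares and `3⁺`-powers. -/
def w (n : ℕ) : Fin 2 := (blockAt (n/7)).getD (n%7) 0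

lemma w_block (m u : ℕ) (hu : u < 7) : w (7*m+u) = (blockAt m).getD u 0 := by
  unfold w
  rw [show (7*m+u)/7 = m by omega, show (7*m+u)%7 = u by omega]

/-- Synchronization: the code occurs in `w` only at positions divisible by 7. -/
lemma sync (x : ℕ) (a b : Bool)
    (h : ∀ u, u < 7 → w (x+u) = (C a b).getD u 0) : x % 7 = 0 := by
  by_contra hs
  have key : ∀ u : Fin 7, (C a b).getD u.val 0 =
      (if x%7 + u.val < 7 then (C (tm (x/7)) (tm (x/7+1))).getD (x%7+u.val) 0
       else (C (tm (x/7+1)) (tm (x/7+2))).getD (x%7+u.val-7) 0) := by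
    intro u
    rw [← h u.val u.isLt]
    by_cases hc : x%7 + u.val < 7
    · rw [if_pos hc, show x + u.val = 7*(x/7) + (x%7+u.val) by omega, w_block _ _ hc]
      rfl
    · rw [if_neg hc, show x + u.val = 7*(x/7+1) + (x%7+u.val-7) by omega,
        w_block _ _ (by omega)]
      unfold blockAt
      rw [show x/7+1+1 = x/7+2 by ring]
  have dec : ∀ (t0 t1 t2 a b : Bool) (s : Fin 7), s.val ≠ 0 →
      ¬ (∀ u : Fin 7, (C a b).getD u.val 0 =
        (if s.val + u.val < 7 then (C t0 t1).getD (s.val+u.val) 0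
         else (C t1 t2).getD (s.val+u.val-7) 0)) := by decide
  exact dec (tm (x/7)) (tm (x/7+1)) (tm (x/7+2)) a b ⟨x%7, by omega⟩ hs key

/-- Determination by 2-letter prefix. -/
lemma injC (a b a' b' : Bool) (h0 : (C a b).getD 0 0 = (C a' b').getD 0 0)
    (h1 : (C a b).getD 1 0 = (C a' b').getD 1 0) : a = a' ∧ b = b' := by
  revert h0 h1; revert a b a' b'; decide

/-- Determination by 2-letter suffix. -/
lemma sufC (a b a' b' : Bool) (h0 : (C a b).getD 5 0 = (C a' b').getD 5 0)
    (h1 : (C a b).getD 6 0 = (C a' b').getD 6 0) : a = a' ∧ b = b' := by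
  revert h0 h1; revert a b a' b'; decide

/-- `w` has no square of period at least 13. -/
lemma noLargeSquare (i p : ℕ) (hp : 13 ≤ p)
    (hS : ∀ s, s < p → w (i+s) = w (i+p+s)) : False := by
  set M := (i+6)/7 with hM
  have hJ1 : i ≤ 7*M := by omega
  have hJ2 : 7*M ≤ i + 6 := by omega
  have occ : ∀ u, u < 7 → w (7*M + p + u) = (C (tm M) (tm (M+1))).getD u 0 := by
    intro u hu
    have h1 : 7*M + p + u = i + p + (7*M + u - i) := by omega
    have h2 := (hS (7*M + u - i) (by omega)).symm
    rw [h1, h2, show i + (7*M+u-i) = 7*M + u by omega, w_block _ _ hu]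
    rfl
  have hmod : (7*M + p) % 7 = 0 := sync _ _ _ occ
  obtain ⟨q, hq⟩ : ∃ q, p = 7*q := ⟨p/7, by omega⟩
  have hq2 : 2 ≤ q := by omega
  have blkEq : ∀ j, i ≤ 7*j → 7*j+7 ≤ i+p →
      tm j = tm (j+q) ∧ tm (j+1) = tm (j+q+1) := by
    intro j h1 h2
    have e : ∀ u, u < 7 → (blockAt j).getD u 0 = (blockAt (j+q)).getD u 0 := by
      intro u hu
      have := hS (7*j+u-i) (by omega)
      rw [show i + (7*j+u-i) = 7*j+u by omega,
        show i + p + (7*j+u-i) = 7*(j+q)+u by omega,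
        w_block _ _ hu, w_block _ _ hu] at this
      exact this
    exact injC _ _ _ _ (e 0 (by omega)) (e 1 (by omega))
  rcases Nat.eq_zero_or_pos (i % 7) with hr | hr
  · -- aligned case : i = 7*M
    refine tm_no_overlap q (by omega) M (fun s hs => ?_)
    rcases Nat.lt_or_ge s q with hsq | hsq
    · have := (blkEq (M+s) (by omega) (by omega)).1
      rwa [show M+s+q = M+q+s by ring] at this
    · have hsq' : s = q := by omega
      rw [hsq']
      have := (blkEq (M+q-1) (by omega) (by omega)).2
      rwa [show M+q-1+1 = M+q by omega, show M+q-1+q+1 = M+q+q by omega] at this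
  · have hfull : ∀ j, M ≤ j → j ≤ M+q-2 → tm j = tm (j+q) ∧ tm (j+1) = tm (j+q+1) :=
      fun j h1 h2 => blkEq j (by omega) (by omega)
    rcases Nat.lt_or_ge (i % 7) 2 with hr2 | hr2
    · -- i % 7 = 1 : use suffix of block M-1
      have suf : ∀ u, 1 ≤ u → u < 7 →
          (blockAt (M-1)).getD u 0 = (blockAt (M+q-1)).getD u 0 := by
        intro u hu1 hu7
        have := hS (7*(M-1)+u-i) (by omega)
        rw [show i + (7*(M-1)+u-i) = 7*(M-1)+u by omega,
          show i + p + (7*(M-1)+u-i) = 7*(M+q-1)+u by omega,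
          w_block _ _ hu7, w_block _ _ hu7] at this
        exact this
      have hM1 : tm (M-1) = tm (M+q-1) ∧ tm (M-1+1) = tm (M+q-1+1) :=
        sufC _ _ _ _ (suf 5 (by omega) (by omega)) (suf 6 (by omega) (by omega))
      refine tm_no_overlap q (by omega) (M-1) (fun s hs => ?_)
      rcases Nat.eq_zero_or_pos s with h0 | h0
      · simpa [h0, show M-1+q = M+q-1 by omega] using hM1.1
      · rcases Nat.lt_or_ge s q with hsq | hsq
        · have := (hfull (M+s-1) (by omega) (by omega)).1
          rwa [show M-1+s = M+s-1 by omega, show M-1+q+s = M+s-1+q by omega]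
        · have hsq' : s = q := by omega
          rw [hsq']
          have := (hfull (M+q-2) (by omega) (by omega)).2
          rwa [show M-1+q+q = M+q-2+q+1 by omega, show M-1+q = M+q-2+1 by omega]
    · -- i % 7 ≥ 2 : use prefix of block M+q-1
      have pre : ∀ u, u < 2 →
          (blockAt (M+q-1)).getD u 0 = (blockAt (M+2*q-1)).getD u 0 := by
        intro u hu
        have := hS (7*(M+q-1)+u-i) (by omega)
        rw [show i + (7*(M+q-1)+u-i) = 7*(M+q-1)+u by omega,
          show i + p + (7*(M+q-1)+u-i) = 7*(M+2*q-1)+u by omega,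
          w_block _ _ (by omega), w_block _ _ (by omega)] at this
        exact this
      have hM1 : tm (M+q-1) = tm (M+2*q-1) ∧ tm (M+q-1+1) = tm (M+2*q-1+1) :=
        injC _ _ _ _ (pre 0 (by omega)) (pre 1 (by omega))
      refine tm_no_overlap q (by omega) M (fun s hs => ?_)
      rcases Nat.lt_or_ge s (q-1) with hsq | hsq
      · have := (hfull (M+s) (by omega) (by omega)).1
        rwa [show M+s+q = M+q+s by ring] at this
      · rcases Nat.lt_or_ge s q with hsq2 | hsq2
        · have hs' : s = q-1 := by omega
          rw [hs', show M+(q-1) = M+q-1 by omega, show M+q+(q-1) = M+2*q-1 by omega]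
          exact hM1.1
        · have hs' : s = q := by omega
          rw [hs']
          have := hM1.2
          rwa [show M+q-1+1 = M+q by omega, show M+2*q-1+1 = M+q+q by omega] at this

/-- Cube of the Thue–Morse morphism. -/
def mu3 (a : Bool) : List Bool := [a, !a, !a, a, !a, a, a, !a]

lemma tm8 (n u : ℕ) (hu : u < 8) : tm (8*n+u) = (mu3 (tm n)).getD u false := by
  interval_cases u <;> simp only [mu3, List.getD]
  · rw [show 8*n+0 = 2*(2*(2*n)) by ring, tm_even, tm_even, tm_even]; simp
  · rw [show 8*n+1 = 2*(2*(2*n))+1 by ring, tm_odd, tm_even, tm_even]; simp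
  · rw [show 8*n+2 = 2*(2*(2*n)+1) by ring, tm_even, tm_odd, tm_even]; simp
  · rw [show 8*n+3 = 2*(2*(2*n)+1)+1 by ring, tm_odd, tm_odd, tm_even]; simp
  · rw [show 8*n+4 = 2*(2*(2*n+1)) by ring, tm_even, tm_even, tm_odd]; simp
  · rw [show 8*n+5 = 2*(2*(2*n+1))+1 by ring, tm_odd, tm_even, tm_odd]; simp
  · rw [show 8*n+6 = 2*(2*(2*n+1)+1) by ring, tm_even, tm_odd, tm_odd]; simp
  · rw [show 8*n+7 = 2*(2*(2*n+1)+1)+1 by ring, tm_odd, tm_odd, tm_odd]; simp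

def Wp (a b : Bool) : List Bool := mu3 a ++ mu3 b

lemma mu3_len (a : Bool) : (mu3 a).length = 8 := rfl

/-- Every 6-letter window of `tm` appears in one of the words `Wp a b`. -/
lemma tmWindow (m : ℕ) : ∃ a b d, d ≤ 7 ∧
    ∀ u, u < 6 → tm (m+u) = (Wp a b).getD (d+u) false := by
  refine ⟨tm (m/8), tm (m/8+1), m%8, by omega, ?_⟩
  intro u hu
  by_cases hc : m%8 + u < 8
  · rw [show m + u = 8*(m/8) + (m%8+u) by omega, tm8 _ _ hc]
    unfold Wp
    rw [List.getD_append _ _ _ _ (by rw [mu3_len]; exact hc)]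
  · rw [show m + u = 8*(m/8+1) + (m%8+u-8) by omega, tm8 _ _ (by omega)]
    unfold Wp
    rw [List.getD_append_right _ _ _ _ (by rw [mu3_len]; omega), mu3_len]

/-- Concatenation of the first `n` values of a block function. -/
def cat (f : ℕ → List (Fin 2)) : ℕ → List (Fin 2)
  | 0 => []
  | (n+1) => cat f n ++ f n

lemma cat_len (f : ℕ → List (Fin 2)) (hf : ∀ j, (f j).length = 7) (n : ℕ) :
    (cat f n).length = 7*n := by
  induction n with
  | zero => rfl
  | succ n ih => simp [cat, ih, hf n]; ring

lemma cat_getD (f : ℕ → List (Fin 2)) (hf : ∀ j, (f j).length = 7) (n J u : ℕ)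
    (hJ : J < n) (hu : u < 7) : (cat f n).getD (7*J+u) 0 = (f J).getD u 0 := by
  induction n with
  | zero => omega
  | succ n ih =>
    rcases Nat.lt_or_ge J n with h | h
    · rw [cat, List.getD_append _ _ _ _ (by rw [cat_len f hf]; omega)]
      exact ih h
    · have hJn : J = n := by omega
      subst hJn
      rw [cat, List.getD_append_right _ _ _ _ (by rw [cat_len f hf]; omega),
        cat_len f hf, show 7*J+u-7*J = u by omega]

def gword (a b : Bool) : List (Fin 2) :=
  cat (fun j => C ((Wp a b).getD j false) ((Wp a b).getD (j+1) false)) 15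

lemma C_len (a b : Bool) : (C a b).length = 7 := by cases a <;> cases b <;> rfl

/-- Every 24-letter window of `w` appears in one of the four words `gword a b`. -/
lemma window (i : ℕ) : ∃ a b c, c ≤ 55 ∧
    ∀ s, s < 24 → w (i+s) = (gword a b).getD (c+s) 0 := by
  obtain ⟨a, b, d, hd, hw⟩ := tmWindow (i/7)
  refine ⟨a, b, 7*d + i%7, by omega, ?_⟩
  intro s hs
  have h1 : i + s = 7*(i/7 + (i%7+s)/7) + (i%7+s)%7 := by omega
  rw [h1, w_block _ _ (by omega)]
  have h2 : 7*d + i%7 + s = 7*(d + (i%7+s)/7) + (i%7+s)%7 := by omega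
  rw [h2]
  unfold gword
  rw [cat_getD _ (fun j => C_len _ _) 15 _ _ (by omega) (by omega)]
  unfold blockAt
  rw [hw ((i%7+s)/7) (by omega),
    show i/7 + (i%7+s)/7 + 1 = i/7 + ((i%7+s)/7 + 1) by ring,
    hw ((i%7+s)/7 + 1) (by omega),
    show d + (i%7+s)/7 + 1 = d + ((i%7+s)/7+1) by ring]

set_option maxRecDepth 10000 in
lemma checkSq : ∀ (a b : Bool) (c : Fin 56) (p : Fin 13), 3 ≤ p.val →
    ∃ s : Fin 12, s.val < p.val ∧
      (gword a b).getD (c.val+s.val) 0 ≠ (gword a b).getD (c.val+p.val+s.val) 0 := by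
  decide

set_option maxRecDepth 10000 in
lemma checkRun : ∀ (a b : Bool) (c : Fin 56),
    ∃ s : Fin 3, (gword a b).getD (c.val+s.val) 0 ≠ (gword a b).getD (c.val+s.val+1) 0 := by
  decide

set_option maxRecDepth 10000 in
lemma checkAlt : ∀ (a b : Bool) (c : Fin 56),
    ∃ s : Fin 6, (gword a b).getD (c.val+s.val) 0 = (gword a b).getD (c.val+s.val+1) 0 := by
  decide

lemma checkSq' (a b : Bool) (c p : ℕ) (hc : c ≤ 55) (hp3 : 3 ≤ p) (hp : p ≤ 12) :
    ∃ s, s < p ∧ (gword a b).getD (c+s) 0 ≠ (gword a b).getD (c+p+s) 0 := by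
  obtain ⟨s, h1, h2⟩ := checkSq a b ⟨c, by omega⟩ ⟨p, by omega⟩ hp3
  exact ⟨s.val, h1, h2⟩

lemma checkRun' (a b : Bool) (c : ℕ) (hc : c ≤ 55) :
    ∃ s, s < 3 ∧ (gword a b).getD (c+s) 0 ≠ (gword a b).getD (c+s+1) 0 := by
  obtain ⟨s, h2⟩ := checkRun a b ⟨c, by omega⟩
  exact ⟨s.val, s.isLt, h2⟩

lemma checkAlt' (a b : Bool) (c : ℕ) (hc : c ≤ 55) :
    ∃ s, s < 6 ∧ (gword a b).getD (c+s) 0 = (gword a b).getD (c+s+1) 0 := by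
  obtain ⟨s, h2⟩ := checkAlt a b ⟨c, by omega⟩
  exact ⟨s.val, s.isLt, h2⟩

/-- `w` has no square of period at least 3. -/
lemma noSquareRel (i L : ℕ) (hL : 3 ≤ L) (h : ∀ s, s < L → w (i+s) = w (i+L+s)) :
    False := by
  rcases Nat.lt_or_ge L 13 with h13 | h13
  · obtain ⟨a, b, c, hc, hwin⟩ := window i
    obtain ⟨s, hsp, hne⟩ := checkSq' a b c L hc hL (by omega)
    apply hne
    rw [show c + L + s = c + (L + s) by ring, ← hwin s (by omega),
      ← hwin (L+s) (by omega), show i + (L + s) = i + L + s by ring]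
    exact h s hsp
  · exact noLargeSquare i L h13 h

/-- `w` has no constant run of length 4. -/
lemma noRun (i : ℕ) (h : ∀ s, s < 4 → w (i+s) = w i) : False := by
  obtain ⟨a, b, c, hc, hwin⟩ := window i
  obtain ⟨s, hs3, hne⟩ := checkRun' a b c hc
  apply hne
  rw [show c + s + 1 = c + (s+1) by ring, ← hwin s (by omega), ← hwin (s+1) (by omega)]
  rw [h s (by omega), h (s+1) (by omega)]

/-- `w` has no alternating run of length 7. -/
lemma noAlt (i : ℕ) (h : ∀ s, s < 6 → w (i+s) ≠ w (i+s+1)) : False := by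
  obtain ⟨a, b, c, hc, hwin⟩ := window i
  obtain ⟨s, hs6, heq⟩ := checkAlt' a b c hc
  refine h s hs6 ?_
  rw [show i+s+1 = i+(s+1) by ring, hwin s (by omega), hwin (s+1) (by omega),
    show c + (s+1) = c + s + 1 by ring]
  exact heq

lemma factor_pointwise {x : List (Fin 2)} {i : ℕ}
    (h : x = (List.range x.length).map (fun j => w (i+j))) :
    ∀ j, j < x.length → x.getD j 0 = w (i+j) := by
  intro j hj
  conv_lhs => rw [h]
  rw [List.getD_eq_getElem?_getD, List.getElem?_map, List.getElem?_range hj]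
  rfl

/-- First clause: no square `yy` with `|y| ≥ 3` occurs in `w`. -/
lemma clause1 : ∀ y : List (Fin 2), 3 ≤ y.length → ¬ FactorOf (y ++ y) w := by
  rintro y hy ⟨i, h⟩
  have fp := factor_pointwise h
  refine noSquareRel i y.length hy (fun s hs => ?_)
  have h1 : (y++y).getD s 0 = w (i+s) := fp s (by simp; omega)
  have h2 : (y++y).getD (y.length+s) 0 = w (i+(y.length+s)) := fp _ (by simp; omega)
  rw [List.getD_append _ _ _ _ (by omega)] at h1
  rw [List.getD_append_right _ _ _ _ (by omega), show y.length+s-y.length = s by omega] at h2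
  rw [show i+y.length+s = i+(y.length+s) by ring, ← h2, ← h1]

lemma rep_len (y : List (Fin 2)) (n : ℕ) :
    ((List.replicate n y).flatten).length = n * y.length := by
  induction n with
  | zero => simp
  | succ n ih => rw [List.replicate_succ, List.flatten_cons, List.length_append, ih]; ring

lemma rep_getD (y : List (Fin 2)) : ∀ n j, j < n * y.length →
    ((List.replicate n y).flatten).getD j 0 = y.getD (j % y.length) 0 := by
  intro n
  induction n with
  | zero => intro j hj; omega
  | succ n ih =>
    intro j hj
    rw [List.replicate_succ, List.flatten_cons]
    rcases Nat.lt_or_ge j y.length with h | h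
    · rw [List.getD_append _ _ _ _ h, Nat.mod_eq_of_lt h]
    · obtain ⟨k, rfl⟩ : ∃ k, j = y.length + k := ⟨j - y.length, by omega⟩
      rw [List.getD_append_right _ _ _ _ (by omega), Nat.add_mod_left,
        show y.length + k - y.length = k by omega]
      refine ih k ?_
      have hexp : (n+1)*y.length = y.length + n*y.length := by ring
      omega

/-- Second clause: no `e`-power with `e > 3` occurs in `w`. -/
lemma clause2 : ∀ (x : List (Fin 2)) (e : ℚ), (3 : ℚ) < e → IsPow e x → ¬ FactorOf x w := by
  rintro x e he ⟨y, y', n, hy, hpre, hx, hsum⟩ ⟨i, hfac⟩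
  have fp := factor_pointwise hfac
  set L := y.length with hLdef
  have hL : 1 ≤ L := List.length_pos_iff.mpr hy
  have hy'le : y'.length ≤ L := hpre.length_le
  have hfrac0 : (0:ℚ) ≤ (y'.length : ℚ) / (L : ℚ) := by positivity
  have hfrac1 : (y'.length : ℚ) / (L : ℚ) ≤ 1 := by
    rw [div_le_one (by exact_mod_cast hL)]
    exact_mod_cast hy'le
  have hn3 : 3 ≤ n := by
    have : (2:ℚ) < (n:ℚ) := by linarith
    exact_mod_cast this
  have hy'3 : n = 3 → y' ≠ [] := by
    intro h3 h0
    rw [h0] at hsum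
    simp [h3] at hsum
    linarith
  have hxlen : 3*L + 1 ≤ x.length := by
    have hlen : x.length = n*L + y'.length := by
      rw [hx, List.length_append, rep_len]
    rcases Nat.eq_zero_or_pos y'.length with h0 | h0
    · have hne : n ≠ 3 := fun h3 => (hy'3 h3) (List.length_eq_zero_iff.mp h0)
      have h4 : 4 ≤ n := by omega
      have := Nat.mul_le_mul_right L h4
      linarith
    · have := Nat.mul_le_mul_right L hn3
      linarith
  have xval : ∀ j, j ≤ 3*L → x.getD j 0 = y.getD (j % L) 0 := by
    intro j hj
    rcases Nat.lt_or_ge j (n*L) with h | h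
    · rw [hx, List.getD_append _ _ _ _ (by rw [rep_len]; exact h), rep_getD y n j h]
    · have h4 : ¬ 4 ≤ n := by
        intro h4
        have := Nat.mul_le_mul_right L h4
        linarith
      have hn : n = 3 := by omega
      have hj3 : j = 3*L := by
        rw [hn] at h
        omega
      have hy'ne := hy'3 hn
      obtain ⟨t, ht⟩ := hpre
      rw [hx, List.getD_append_right _ _ _ _ (by rw [rep_len, hn]; omega),
        rep_len, hn, hj3, Nat.sub_self, Nat.mul_mod_left, ← ht,
        List.getD_append _ _ _ _ (List.length_pos_iff.mpr hy'ne)]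
  have W : ∀ j, j ≤ 3*L → w (i+j) = y.getD (j % L) 0 := by
    intro j hj
    rw [← fp j (by omega), xval j hj]
  rcases Nat.lt_or_ge L 3 with hL3 | hL3
  · rcases (by omega : L = 1 ∨ L = 2) with h1 | h2
    · rw [h1] at W
      refine noRun i (fun s hs => ?_)
      have h0 : w i = y.getD 0 0 := by simpa using W 0 (by omega)
      rw [W s (by omega), Nat.mod_one, h0]
    · rw [h2] at W
      have h0 : w i = y.getD 0 0 := by simpa using W 0 (by omega)
      by_cases hcc : y.getD 0 0 = y.getD 1 0
      · refine noRun i (fun s hs => ?_)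
        rw [W s (by omega), h0]
        rcases Nat.mod_two_eq_zero_or_one s with h | h <;> rw [h]
        exact hcc.symm
      · refine noAlt i (fun s hs => ?_)
        rw [W s (by omega), show i+s+1 = i+(s+1) by ring, W (s+1) (by omega)]
        rcases Nat.mod_two_eq_zero_or_one s with h | h
        · rw [h, show (s+1)%2 = 1 by omega]
          exact hcc
        · rw [h, show (s+1)%2 = 0 by omega]
          exact fun hh => hcc hh.symm
  · refine noSquareRel i L hL3 (fun s hs => ?_)
    rw [W s (by omega), show i+L+s = i+(L+s) by ring, W (L+s) (by omega),
      Nat.add_mod_left]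

end Avoid37

theorem exists_infinite_word_avoiding_squares3_and_3plus_powers :
    ∃ w : ℕ → Fin 2,
      (∀ y : List (Fin 2), 3 ≤ y.length → ¬ FactorOf (y ++ y) w) ∧
      (∀ (x : List (Fin 2)) (e : ℚ), (3 : ℚ) < e → IsPow e x → ¬ FactorOf x w) :=
  ⟨Avoid37.w, Avoid37.clause1, Avoid37.clause2⟩
end

section
/- Suppose a uniform injective morphism φ: Σ₃* → {0,1}* satisfies: (a) if φ(ab) = t·φ(c)·u for letters a,b,c then t = ε or u = ε; and (b) if φ(a)=st, φ(b)=uv, φ(c)=sv for letters a,b,c then a=c or b=c. If w is squarefree over Σ₃ and φ(w) = x y y z with |y| ≥ 2·k (where k is the length of images of letters), then a contradiction follows; i.e., φ(w) contains no square yy with |y| ≥ 2k. -/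
namespace UMALS

variable {φ : Fin 3 → List (Fin 2)} {k : ℕ}

lemma fm_length (hu : ∀ a, (φ a).length = k) (w : List (Fin 3)) :
    (w.flatMap φ).length = w.length * k := by
  induction w with
  | nil => simp
  | cons a w ih =>
    simp only [List.flatMap_cons, List.length_append, ih, hu, List.length_cons]
    ring

lemma fm_drop (hu : ∀ a, (φ a).length = k) :
    ∀ (n : ℕ) (w : List (Fin 3)), (w.flatMap φ).drop (n * k) = (w.drop n).flatMap φ
  | 0, w => by simp
  | n+1, [] => by simp
  | n+1, a :: w => by
    have h1 : (n+1) * k = (φ a).length + n * k := by rw [hu]; ring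
    rw [List.flatMap_cons, h1, ← List.drop_drop, List.drop_left, fm_drop hu n w]
    rfl

lemma fm_take (hu : ∀ a, (φ a).length = k) :
    ∀ (n : ℕ) (w : List (Fin 3)), (w.flatMap φ).take (n * k) = (w.take n).flatMap φ
  | 0, w => by simp
  | n+1, [] => by simp
  | n+1, a :: w => by
    have h1 : (n+1) * k = (φ a).length + n * k := by rw [hu]; ring
    rw [List.flatMap_cons, h1, List.take_add, List.take_left, List.drop_left,
      fm_take hu n w, List.take_succ_cons, List.flatMap_cons]

lemma fm_block (hu : ∀ a, (φ a).length = k) (w : List (Fin 3)) (n : ℕ) (h : n < w.length) :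
    ((w.flatMap φ).drop (n * k)).take k = φ (w.getD n 0) := by
  rw [fm_drop hu, List.drop_eq_getElem_cons h, List.flatMap_cons,
    List.getD_eq_getElem w 0 h, ← hu w[n], List.take_left]

lemma fm_inj (hu : ∀ a, (φ a).length = k) (hinj : Function.Injective φ) :
    ∀ u v : List (Fin 3), u.length = v.length → u.flatMap φ = v.flatMap φ → u = v
  | [], [], _, _ => rfl
  | [], b :: v, hl, _ => by simp at hl
  | a :: u, [], hl, _ => by simp at hl
  | a :: u, b :: v, hl, he => by
    rw [List.flatMap_cons, List.flatMap_cons] at he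
    have h1 : φ a = φ b := by
      have t1 : (φ a ++ u.flatMap φ).take k = φ a := by rw [← hu a]; exact List.take_left
      have t2 : (φ b ++ v.flatMap φ).take k = φ b := by rw [← hu b]; exact List.take_left
      rw [← t1, ← t2, he]
    have h2 : u.flatMap φ = v.flatMap φ := by
      have t1 : (φ a ++ u.flatMap φ).drop k = u.flatMap φ := by
        rw [← hu a]; exact List.drop_left
      have t2 : (φ b ++ v.flatMap φ).drop k = v.flatMap φ := by
        rw [← hu b]; exact List.drop_left
      rw [← t1, ← t2, he]
    have hl' : u.length = v.length := by simpa using hl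
    rw [hinj h1, fm_inj hu hinj u v hl' h2]

lemma square_not_squarefree {α : Type*} (w : List α) (q p : ℕ) (hp : 0 < p)
    (hle : q + (p + p) ≤ w.length)
    (heq : (w.drop q).take p = (w.drop (q + p)).take p) : ¬ SquarefreeWord w := by
  intro hsf
  refine hsf ((w.drop q).take p) ?_ ?_
  · have hlen : ((w.drop q).take p).length = p := by
      simp only [List.length_take, List.length_drop]; omega
    intro h; rw [h] at hlen; simp at hlen; omega
  · have hud : (w.drop q).take (p + p) = (w.drop q).take p ++ (w.drop q).take p := by
      rw [List.take_add, List.drop_drop, ← heq]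
    rw [← hud]
    exact ((List.take_prefix _ _).isInfix).trans ((List.drop_suffix _ _).isInfix)

end UMALS

theorem uniform_morphism_avoids_large_squares
    (φ : Fin 3 → List (Fin 2)) (k : ℕ) (hk : 0 < k)
    (huniform : ∀ a, (φ a).length = k)
    (hinj : Function.Injective φ)
    (hincl : ∀ (a b c : Fin 3) (t u : List (Fin 2)),
      φ a ++ φ b = t ++ φ c ++ u → t = [] ∨ u = [])
    (hinter : ∀ (a b c : Fin 3) (s t u v : List (Fin 2)),
      φ a = s ++ t → φ b = u ++ v → φ c = s ++ v → a = c ∨ b = c) :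
    ∀ w : List (Fin 3), SquarefreeWord w →
      ∀ y : List (Fin 2), 2 * k ≤ y.length → ¬ (y ++ y) <:+: w.flatMap φ := by
  intro w hsf y hy2 hin
  replace hin : (y ++ y) <:+: w.flatMap φ := hin
  obtain ⟨x, z, hxz⟩ := hin
  have hWl : (w.flatMap φ).length = w.length * k := UMALS.fm_length huniform w
  have hlen : x.length + (y.length + y.length) + z.length = w.length * k := by
    have h := congrArg List.length hxz
    simp only [List.length_append, hWl] at h
    omega
  obtain ⟨q, r, hr, hX⟩ : ∃ q r, r < k ∧ x.length = q * k + r := by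
    refine ⟨x.length / k, x.length % k, Nat.mod_lt _ hk, ?_⟩
    have h := Nat.div_add_mod x.length k
    have E : x.length / k * k = k * (x.length / k) := Nat.mul_comm _ _
    omega
  -- basic segment facts
  have hd1 : (w.flatMap φ).drop x.length = y ++ (y ++ z) := by
    rw [← hxz, List.append_assoc, List.drop_left, List.append_assoc]
  have hd2 : (w.flatMap φ).drop (x.length + y.length) = y ++ z := by
    rw [← List.drop_drop, hd1, List.drop_left]
  have shift : ∀ d l, d + l ≤ y.length →
      ((w.flatMap φ).drop (x.length + d)).take l
        = ((w.flatMap φ).drop (x.length + y.length + d)).take l := by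
    intro d l hdl
    have a1 : (w.flatMap φ).drop (x.length + d) = y.drop d ++ (y ++ z) := by
      rw [← List.drop_drop, hd1, List.drop_append_of_le_length (by omega)]
    have a2 : (w.flatMap φ).drop (x.length + y.length + d) = y.drop d ++ z := by
      rw [← List.drop_drop, hd2, List.drop_append_of_le_length (by omega)]
    rw [a1, a2, List.take_append_of_le_length (by rw [List.length_drop]; omega),
      List.take_append_of_le_length (by rw [List.length_drop]; omega)]
  have hseglen : ∀ a l, a + l ≤ w.length * k →
      (((w.flatMap φ).drop a).take l).length = l := by
    intro a l h
    rw [List.length_take, List.length_drop, hWl]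
    omega
  have hsplit : ∀ a l₁ l₂, ((w.flatMap φ).drop a).take (l₁ + l₂)
      = ((w.flatMap φ).drop a).take l₁ ++ ((w.flatMap φ).drop (a + l₁)).take l₂ := by
    intro a l₁ l₂
    rw [List.take_add, List.drop_drop]
  -- Step 1 : the image of the letter w[q+1] occurs inside y, hence shifted by |y|.
  have hq2 : q + 2 ≤ w.length := by
    have h1 : (q + 2) * k ≤ w.length * k := by rw [add_mul]; omega
    exact Nat.le_of_mul_le_mul_right h1 hk
  have hc1 : ((w.flatMap φ).drop (x.length + (k - r))).take k = φ (w.getD (q+1) 0) := by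
    have e : (q + 1) * k = x.length + (k - r) := by rw [add_mul, one_mul]; omega
    rw [← e]
    exact UMALS.fm_block huniform w (q+1) (by omega)
  have hc2 : ((w.flatMap φ).drop (x.length + y.length + (k - r))).take k
      = φ (w.getD (q+1) 0) := by
    rw [← shift (k - r) k (by omega)]
    exact hc1
  obtain ⟨m, r', hr', hP⟩ : ∃ m r', r' < k ∧ x.length + y.length + (k - r) = k * m + r' := by
    refine ⟨(x.length + y.length + (k - r)) / k, (x.length + y.length + (k - r)) % k,
      Nat.mod_lt _ hk, (Nat.div_add_mod _ k).symm⟩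
  have hPk : x.length + y.length + (k - r) + k ≤ w.length * k := by omega
  -- synchronization: r' must be 0
  have hr'0 : r' = 0 := by
    by_contra hr'ne
    have hm2 : m + 2 ≤ w.length := by
      have h1 : (m + 1) * k < w.length * k := by
        have E : (m + 1) * k = k * m + k := by ring
        omega
      have := Nat.lt_of_mul_lt_mul_right h1
      omega
    have hmk : m * k = k * m := Nat.mul_comm _ _
    have hbig : ((w.flatMap φ).drop (m*k)).take (k + k)
        = φ (w.getD m 0) ++ φ (w.getD (m+1) 0) := by
      rw [hsplit (m*k) k k, UMALS.fm_block huniform w m (by omega),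
        show m*k + k = (m+1)*k from by rw [add_mul, one_mul],
        UMALS.fm_block huniform w (m+1) (by omega)]
    have hsm : ((w.flatMap φ).drop (m*k)).take (k + k)
        = (((w.flatMap φ).drop (m*k)).take r' ++ φ (w.getD (q+1) 0))
          ++ ((w.flatMap φ).drop (x.length + y.length + (k - r) + k)).take (k - r') := by
      have e1 : k + k = r' + k + (k - r') := by omega
      rw [e1, hsplit (m*k) (r' + k) (k - r'), hsplit (m*k) r' k,
        show m*k + r' = x.length + y.length + (k - r) from by omega,
        show m*k + (r' + k) = x.length + y.length + (k - r) + k from by omega, hc2]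
    rcases hincl _ _ _ _ _ (hbig.symm.trans hsm) with ht | hu'
    · have hl := hseglen (m*k) r' (by omega)
      rw [ht] at hl
      simp at hl
      omega
    · have h2k : (m + 2) * k ≤ w.length * k := Nat.mul_le_mul_right k hm2
      have E2 : (m + 2) * k = k * m + k + k := by ring
      have hl := hseglen (x.length + y.length + (k - r) + k) (k - r') (by omega)
      rw [hu'] at hl
      simp at hl
      omega
  -- hence k divides |y|
  have hdvd : k ∣ y.length := by
    have d1 : k ∣ (x.length + y.length + (k - r)) := ⟨m, by omega⟩
    have d2 : k ∣ (q+1) * k := dvd_mul_left k (q+1)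
    have hsub : y.length = (x.length + y.length + (k - r)) - (q+1) * k := by
      rw [add_mul, one_mul]; omega
    rw [hsub]
    exact Nat.dvd_sub d1 d2
  obtain ⟨p, hp⟩ := hdvd
  have hp2 : 2 ≤ p := by
    rcases Nat.lt_or_ge p 2 with h | h
    · interval_cases p <;> omega
    · exact h
  have hyl : y.length = p * k := by rw [hp, Nat.mul_comm]
  rcases Nat.eq_zero_or_pos r with hr0 | hrpos
  · -- aligned case : r = 0
    have hqp : q + (p + p) ≤ w.length := by
      have h1 : (q + (p + p)) * k ≤ w.length * k := by
        have E : (q + (p + p)) * k = q * k + (k * p + k * p) := by ring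
        omega
      exact Nat.le_of_mul_le_mul_right h1 hk
    have o1 : ((w.flatMap φ).drop (q * k)).take (p * k) = y := by
      rw [show q * k = x.length from by omega, ← hyl, hd1]
      exact List.take_left
    have o2 : ((w.flatMap φ).drop ((q + p) * k)).take (p * k) = y := by
      have E : (q + p) * k = x.length + y.length := by
        have E2 : (q + p) * k = q * k + k * p := by ring
        omega
      rw [E, ← hyl, hd2]
      exact List.take_left
    have hw1 : ((w.drop q).take p).flatMap φ = ((w.drop (q+p)).take p).flatMap φ := by
      rw [← UMALS.fm_take huniform p (w.drop q), ← UMALS.fm_drop huniform q w,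
        ← UMALS.fm_take huniform p (w.drop (q+p)), ← UMALS.fm_drop huniform (q+p) w, o1, o2]
    have hl1 : ((w.drop q).take p).length = p := by
      rw [List.length_take, List.length_drop]; omega
    have hl2 : ((w.drop (q+p)).take p).length = p := by
      rw [List.length_take, List.length_drop]; omega
    have heq := UMALS.fm_inj huniform hinj _ _ (hl1.trans hl2.symm) hw1
    exact UMALS.square_not_squarefree w q p (by omega) (by omega) heq hsf
  · -- unaligned case : r > 0
    have hq2p : q + (p + p) < w.length := by
      have h1 : (q + (p + p)) * k < w.length * k := by
        have E : (q + (p + p)) * k = q * k + (k * p + k * p) := by ring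
        omega
      exact Nat.lt_of_mul_lt_mul_right h1
    have hbk : ∀ i, i < w.length → φ (w.getD i 0)
        = ((w.flatMap φ).drop (i*k)).take r ++ ((w.flatMap φ).drop (i*k + r)).take (k - r) := by
      intro i hi
      rw [← UMALS.fm_block huniform w i hi, ← hsplit (i*k) r (k - r),
        show r + (k - r) = k from by omega]
    have hts : ∀ j, j < p →
        ((w.flatMap φ).drop ((q+j)*k + r)).take (k - r)
          = ((w.flatMap φ).drop ((q+p+j)*k + r)).take (k - r) := by
      intro j hj
      have hjk : j * k + k ≤ k * p := by
        have h1 := Nat.mul_le_mul_right k (show j + 1 ≤ p from by omega)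
        have E : (j + 1) * k = j * k + k := by ring
        have E2 : p * k = k * p := by ring
        omega
      have e1 : (q+j)*k + r = x.length + j*k := by
        have E : (q+j)*k = q*k + j*k := by ring
        omega
      have e2 : (q+p+j)*k + r = x.length + y.length + j*k := by
        have E : (q+p+j)*k = q*k + k*p + j*k := by ring
        omega
      rw [e1, e2]
      exact shift (j*k) (k - r) (by omega)
    have hss : ∀ j, 1 ≤ j → j ≤ p →
        ((w.flatMap φ).drop ((q+j)*k)).take r
          = ((w.flatMap φ).drop ((q+p+j)*k)).take r := by
      intro j hj1 hjp
      have hjk : j * k ≤ k * p := by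
        have h1 := Nat.mul_le_mul_right k hjp
        have E2 : p * k = k * p := by ring
        omega
      have hk1 : k ≤ j * k := by
        have h1 := Nat.mul_le_mul_right k hj1
        have E : 1 * k = k := by ring
        omega
      have e1 : (q+j)*k = x.length + (j*k - r) := by
        have E : (q+j)*k = q*k + j*k := by ring
        omega
      have e2 : (q+p+j)*k = x.length + y.length + (j*k - r) := by
        have E : (q+p+j)*k = q*k + k*p + j*k := by ring
        omega
      rw [e1, e2]
      exact shift (j*k - r) r (by omega)
    have hmid : ∀ j, 1 ≤ j → j < p → w.getD (q+j) 0 = w.getD (q+p+j) 0 := by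
      intro j h1 hjp
      apply hinj
      rw [hbk (q+j) (by omega), hbk (q+p+j) (by omega), hts j hjp, hss j h1 (by omega)]
    have hA := hbk (q+p+p) (by omega)
    have hB := hbk q (by omega)
    have ht0 := hts 0 (by omega)
    simp only [Nat.add_zero] at ht0
    have hsp := hss p (by omega) (le_refl p)
    have hC : φ (w.getD (q+p) 0) = ((w.flatMap φ).drop ((q+p+p)*k)).take r
        ++ ((w.flatMap φ).drop (q*k + r)).take (k - r) := by
      rw [hbk (q+p) (by omega), hsp, ← ht0]
    rcases hinter _ _ _ _ _ _ _ hA hB hC with hcase | hcase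
    · -- w[q+2p] = w[q+p] : square at q+1
      have hall : ∀ j, j < p → w.getD (q+1+j) 0 = w.getD (q+1+p+j) 0 := by
        intro j hj
        rcases Nat.lt_or_ge (j+1) p with h | h
        · have hm := hmid (j+1) (by omega) h
          rw [show q+1+j = q+(j+1) from by omega, show q+1+p+j = q+p+(j+1) from by omega]
          exact hm
        · rw [show q+1+j = q+p from by omega, show q+1+p+j = q+p+p from by omega]
          exact hcase.symm
      have heq : (w.drop (q+1)).take p = (w.drop (q+1+p)).take p := by
        apply List.ext_getElem
        · rw [List.length_take, List.length_drop, List.length_take, List.length_drop]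
          omega
        · intro i h1 h2
          have hip : i < p := lt_of_lt_of_le h1 (by rw [List.length_take]; exact min_le_left _ _)
          rw [List.getElem_take, List.getElem_drop, List.getElem_take, List.getElem_drop,
            ← List.getD_eq_getElem w 0, ← List.getD_eq_getElem w 0]
          exact hall i hip
      exact UMALS.square_not_squarefree w (q+1) p (by omega) (by omega) heq hsf
    · -- w[q] = w[q+p] : square at q
      have hall : ∀ j, j < p → w.getD (q+j) 0 = w.getD (q+p+j) 0 := by
        intro j hj
        rcases Nat.eq_zero_or_pos j with rfl | hj1
        · simpa using hcase
        · exact hmid j hj1 hj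
      have heq : (w.drop q).take p = (w.drop (q+p)).take p := by
        apply List.ext_getElem
        · rw [List.length_take, List.length_drop, List.length_take, List.length_drop]
          omega
        · intro i h1 h2
          have hip : i < p := lt_of_lt_of_le h1 (by rw [List.length_take]; exact min_le_left _ _)
          rw [List.getElem_take, List.getElem_drop, List.getElem_take, List.getElem_drop,
            ← List.getD_eq_getElem w 0, ← List.getD_eq_getElem w 0]
          exact hall i hip
      exact UMALS.square_not_squarefree w q p (by omega) (by omega) heq hsf
end
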